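/- arXiv:1608.02703 — 6 statements merged into one kernel-verified Lean document; each statement's English description precedes it below -/
import Mathlib

section
/- For every integer m ≥ 3, the error term E_m(r) = V_m(r) − (2^m/ζ(m)) r^m satisfies E_m(r) = Ω(r^{m−1}); that is, there exists a constant c > 0 such that for every N there is a positive integer r ≥ N with |V_m(r) − (2^m/ζ(m)) r^m| ≥ c · r^{m−1}. -/
/-!
For a prime `p`, a point of the shell `[-p, p]^m \ [-(p-1), p-1]^m` has a coordinate `±p`, so
it is invisible exactly when `p` divides all its coordinates, i.e. when it is `p • y` with
`y ∈ [-1, 1]^m \ {0}`. Hence `V_m(p) - V_m(p-1) = (2p+1)^m - (2p-1)^m - (3^m - 1)`, so the error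
term jumps by `m (2^m - 2^m/ζ(m)) p^(m-1) + O(p^(m-2))` between `p - 1` and `p`. As `ζ(m) > 1`
this jump is `≥ c p^(m-1)` for large primes `p`, and then `|E_m(p)|` or `|E_m(p-1)|` is at
least `c/2 · p^(m-1)`.
-/

/-- Number of lattice points visible from the origin in `[-r, r]^m`. -/
noncomputable def Vm (m r : ℕ) : ℕ :=
  ((Fintype.piFinset fun _ : Fin m => Finset.Icc (-(r : ℤ)) (r : ℤ)).filter
    fun x => Finset.univ.gcd x = 1).card

open Finset

noncomputable def latticeCube (m r : ℕ) : Finset (Fin m → ℤ) :=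
  Fintype.piFinset fun _ => Icc (-(r : ℤ)) r

theorem mem_latticeCube {m r : ℕ} {x : Fin m → ℤ} : x ∈ latticeCube m r ↔ ∀ i, |x i| ≤ r := by
  simp only [latticeCube, Fintype.mem_piFinset, mem_Icc, abs_le]

theorem card_latticeCube (m r : ℕ) : #(latticeCube m r) = (2 * r + 1) ^ m := by
  simp only [latticeCube, Fintype.card_piFinset, Int.card_Icc, prod_const, card_univ,
    Fintype.card_fin]
  congr 1
  omega

theorem latticeCube_mono {m r s : ℕ} (h : r ≤ s) : latticeCube m r ⊆ latticeCube m s :=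
  fun _ hx => mem_latticeCube.2 fun i => (mem_latticeCube.1 hx i).trans (by exact_mod_cast h)

theorem gcd_ne_one_iff_forall_dvd {ι : Type*} {s : Finset ι} {x : ι → ℤ} {j : ι} (hj : j ∈ s)
    {p : ℕ} (hp : p.Prime) (hxj : |x j| = p) : s.gcd x ≠ 1 ↔ ∀ i ∈ s, (p : ℤ) ∣ x i := by
  constructor
  · intro hgcd i hi
    have hdvd : (s.gcd x).natAbs ∣ p := by
      rw [← Int.natAbs_natCast p, ← hxj, Int.natAbs_abs]
      exact Int.natAbs_dvd_natAbs.2 (gcd_dvd hj)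
    rcases hp.eq_one_or_self_of_dvd _ hdvd with h1 | hp'
    · have hnonneg : 0 ≤ s.gcd x := Int.nonneg_of_normalize_eq_self normalize_gcd
      omega
    · exact (Int.natCast_dvd.2 hp'.symm.dvd).trans (gcd_dvd hi)
  · intro hdvd hgcd
    have : (p : ℤ) ∣ 1 := hgcd ▸ dvd_gcd hdvd
    exact hp.one_lt.ne' (by exact_mod_cast Int.eq_one_of_dvd_one (by positivity) this)

theorem mem_latticeCube_sdiff_pred {m p : ℕ} (hp : 0 < p) {x : Fin m → ℤ} :
    x ∈ latticeCube m p \ latticeCube m (p - 1) ↔ (∀ i, |x i| ≤ p) ∧ ∃ j, |x j| = p := by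
  simp only [mem_sdiff, mem_latticeCube, not_forall, not_le]
  refine and_congr_right fun hx => exists_congr fun j => ?_
  have := hx j
  generalize |x j| = a at this ⊢
  omega

theorem latticeCube_sdiff_pred_filter_gcd_ne_one {m p : ℕ} (hp : p.Prime) :
    (latticeCube m p \ latticeCube m (p - 1)).filter (fun x => univ.gcd x ≠ 1) =
      ((latticeCube m 1).erase 0).image ((p : ℤ) • ·) := by
  have hp0 : (0 : ℤ) < p := by exact_mod_cast hp.pos
  ext x
  simp only [mem_filter, mem_latticeCube_sdiff_pred hp.pos, mem_image, mem_erase, mem_latticeCube]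
  constructor
  · rintro ⟨⟨hx, j, hxj⟩, hgcd⟩
    have hdvd := (gcd_ne_one_iff_forall_dvd (mem_univ j) hp hxj).1 hgcd
    choose y hy using fun i => hdvd i (mem_univ i)
    refine ⟨y, ⟨fun hy0 => ?_, fun i => ?_⟩, funext fun i => (hy i).symm⟩
    · rw [hy j, hy0, Pi.zero_apply, mul_zero, abs_zero] at hxj
      exact hp.ne_zero (by exact_mod_cast hxj.symm)
    · have := hx i
      rw [hy i, abs_mul, Nat.abs_cast] at this
      exact_mod_cast le_of_mul_le_mul_left (by simpa using this) hp0
  · rintro ⟨y, ⟨hy0, hy⟩, rfl⟩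
    obtain ⟨j, hj⟩ := Function.ne_iff.1 hy0
    have hyj : |y j| = 1 := le_antisymm (by exact_mod_cast hy j) (Int.one_le_abs hj)
    have hpyj : |(p : ℤ) * y j| = p := by rw [abs_mul, hyj, Nat.abs_cast, mul_one]
    refine ⟨⟨fun i => ?_, j, hpyj⟩, ?_⟩
    · rw [Pi.smul_apply, smul_eq_mul, abs_mul, Nat.abs_cast]
      exact mul_le_of_le_one_right hp0.le (by exact_mod_cast hy i)
    · exact (gcd_ne_one_iff_forall_dvd (mem_univ j) hp hpyj).2 fun i _ => dvd_mul_right _ _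

theorem Vm_sub_Vm_pred {m p : ℕ} (hp : p.Prime) :
    (Vm m p : ℤ) - Vm m (p - 1) = (2 * p + 1) ^ m - (2 * p - 1) ^ m - (3 ^ m - 1) := by
  set S := latticeCube m p \ latticeCube m (p - 1)
  have hsub : latticeCube m (p - 1) ⊆ latticeCube m p := latticeCube_mono (Nat.sub_le p 1)
  have hV : Vm m p = #(S.filter fun x => univ.gcd x = 1) + Vm m (p - 1) := by
    rw [Vm, Vm, ← card_union_of_disjoint]
    · congr 1
      ext x
      simp only [S, mem_union, mem_filter, mem_sdiff]
      have := @hsub x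
      tauto
    · exact disjoint_filter_filter sdiff_disjoint
  have hS : _ + #(S.filter fun x => univ.gcd x ≠ 1) = #S :=
    card_filter_add_card_filter_not (s := S) fun x => univ.gcd x = 1
  have hnot : #(S.filter fun x => univ.gcd x ≠ 1) = 3 ^ m - 1 := by
    rw [latticeCube_sdiff_pred_filter_gcd_ne_one hp, card_image_of_injective _
      (smul_right_injective _ (by exact_mod_cast hp.ne_zero)),
      card_erase_of_mem (mem_latticeCube.2 fun i => by simp), card_latticeCube]
  have hcard : #S + _ = _ := card_sdiff_add_card_eq_card hsub
  rw [card_latticeCube, card_latticeCube] at hcard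
  have h3 : 1 ≤ 3 ^ m := Nat.one_le_pow _ _ (by norm_num)
  have hp1 : 1 ≤ p := hp.one_lt.le
  zify [h3, hp1] at hV hS hnot hcard
  linear_combination hV + hS - hnot + hcard

open Filter Topology

theorem one_lt_riemannZeta_natCast_re {m : ℕ} (hm : 1 < m) : 1 < (riemannZeta m).re := by
  have hsum : Summable fun n : ℕ => 1 / (n : ℝ) ^ m := Real.summable_one_div_nat_pow.2 hm
  have hζ : riemannZeta m = ((∑' n : ℕ, 1 / (n : ℝ) ^ m : ℝ) : ℂ) := by
    rw [zeta_nat_eq_tsum_of_gt_one hm, Complex.ofReal_tsum]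
    push_cast
    rfl
  rw [hζ, Complex.ofReal_re]
  calc (1 : ℝ) < ∑ n ∈ ({1, 2} : Finset ℕ), 1 / (n : ℝ) ^ m := by norm_num
    _ ≤ ∑' n : ℕ, 1 / (n : ℝ) ^ m := hsum.sum_le_tsum _ fun n _ => by positivity

theorem mul_pow_sub_one_mul_le_pow_sub_pow {R : Type*} [CommRing R] [LinearOrder R]
    [IsStrictOrderedRing R] {a b : R} (hb : 0 ≤ b) (hab : b ≤ a) (n : ℕ) :
    n * b ^ (n - 1) * (a - b) ≤ a ^ n - b ^ n := by
  rw [← geom_sum₂_mul]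
  gcongr ?_ * _
  calc (n : R) * b ^ (n - 1) = ∑ i ∈ range n, b ^ i * b ^ (n - 1 - i) := by
        rw [sum_congr rfl fun i hi => by rw [← pow_add, Nat.add_sub_cancel' (by simp at hi; omega)],
          sum_const, card_range, nsmul_eq_mul]
    _ ≤ ∑ i ∈ range n, a ^ i * b ^ (n - 1 - i) := by gcongr

noncomputable def shellJump (m : ℕ) (A x : ℝ) : ℝ :=
  (2 * x + 1) ^ m - (2 * x - 1) ^ m - (3 ^ m - 1) - A * (x ^ m - (x - 1) ^ m)

theorem le_shellJump {m : ℕ} {A x : ℝ} (hA : 0 ≤ A) (hx : 1 ≤ x) :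
    (m * (2 * (2 - x⁻¹) ^ (m - 1) - A) - (3 ^ m - 1) / x ^ (m - 1)) * x ^ (m - 1) ≤
      shellJump m A x := by
  have hx0 : x ≠ 0 := by positivity
  have hodd : m * (2 * x - 1) ^ (m - 1) * 2 ≤ (2 * x + 1) ^ m - (2 * x - 1) ^ m := by
    have h := mul_pow_sub_one_mul_le_pow_sub_pow (a := 2 * x + 1) (b := 2 * x - 1)
      (by linarith) (by linarith) m
    rwa [add_sub_sub_cancel, one_add_one_eq_two] at h
  have hunit : x ^ m - (x - 1) ^ m ≤ m * x ^ (m - 1) := by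
    simpa [abs_of_nonneg (by linarith : 0 ≤ x - 1), abs_of_nonneg (by linarith : 0 ≤ x)] using
      (le_abs_self _).trans (abs_pow_sub_pow_le x (x - 1) m)
  have hfactor : (2 * x - 1) ^ (m - 1) = (2 - x⁻¹) ^ (m - 1) * x ^ (m - 1) := by
    rw [← mul_pow, sub_mul, inv_mul_cancel₀ hx0, mul_comm]
  have := mul_le_mul_of_nonneg_left hunit hA
  calc _ = m * (2 * x - 1) ^ (m - 1) * 2 - A * (m * x ^ (m - 1)) - (3 ^ m - 1) := by
        rw [sub_mul, div_mul_cancel₀ _ (pow_ne_zero _ hx0), hfactor]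
        ring
    _ ≤ shellJump m A x := by
        unfold shellJump
        linarith

theorem tendsto_shellJump_coeff {m : ℕ} (hm : 2 ≤ m) (A : ℝ) :
    Tendsto (fun x : ℝ => m * (2 * (2 - x⁻¹) ^ (m - 1) - A) - (3 ^ m - 1) / x ^ (m - 1)) atTop
      (𝓝 (m * (2 ^ m - A))) := by
  have hpow : Tendsto (fun x : ℝ => (2 - x⁻¹) ^ (m - 1)) atTop (𝓝 (2 ^ (m - 1))) := by
    simpa using ((tendsto_const_nhds (x := (2 : ℝ))).sub tendsto_inv_atTop_zero).pow (m - 1)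
  have hdecay : Tendsto (fun x : ℝ => (3 ^ m - 1) / x ^ (m - 1)) atTop (𝓝 0) :=
    tendsto_const_nhds.div_atTop (tendsto_pow_atTop (by omega))
  convert (((hpow.const_mul 2).sub_const A).const_mul (m : ℝ)).sub hdecay using 2
  rw [sub_zero, ← pow_succ', Nat.sub_add_cancel (by omega)]

theorem eventually_mul_pow_le_shellJump {m : ℕ} (hm : 2 ≤ m) {A c : ℝ} (hA : 0 ≤ A)
    (hc : c < m * (2 ^ m - A)) : ∀ᶠ x in atTop, c * x ^ (m - 1) ≤ shellJump m A x := by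
  filter_upwards [(tendsto_shellJump_coeff hm A).eventually_const_lt hc, eventually_ge_atTop 1]
    with x hcx hx
  exact (mul_le_mul_of_nonneg_right hcx.le (by positivity)).trans (le_shellJump hA hx)

theorem le_abs_or_le_abs_pred_of_le_sub {E : ℕ → ℝ} {c : ℝ} {k n : ℕ} (hc : 0 ≤ c)
    (h : 2 * c * n ^ k ≤ E n - E (n - 1)) :
    c * n ^ k ≤ |E n| ∨ c * ((n - 1 : ℕ) : ℝ) ^ k ≤ |E (n - 1)| := by
  by_contra! H
  have hmono : c * ((n - 1 : ℕ) : ℝ) ^ k ≤ c * n ^ k := by gcongr; exact Nat.sub_le n 1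
  linarith [le_abs_self (E n), neg_abs_le (E (n - 1))]

noncomputable def errorTerm (m r : ℕ) : ℝ :=
  Vm m r - 2 ^ m / (riemannZeta m).re * (r : ℝ) ^ m

theorem errorTerm_sub_errorTerm_pred {m p : ℕ} (hp : p.Prime) :
    errorTerm m p - errorTerm m (p - 1) = shellJump m (2 ^ m / (riemannZeta m).re) p := by
  have h := congrArg (Int.cast : ℤ → ℝ) (Vm_sub_Vm_pred (m := m) hp)
  push_cast at h
  rw [errorTerm, errorTerm, shellJump, Nat.cast_pred hp.pos]
  linear_combination h

theorem error_term_omega (m : ℕ) (hm : 3 ≤ m) :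
    ∃ c : ℝ, 0 < c ∧ ∀ N : ℕ, ∃ r : ℕ, N ≤ r ∧ 0 < r ∧
      c * (r : ℝ) ^ (m - 1) ≤
        |(Vm m r : ℝ) - 2 ^ m / (riemannZeta m).re * (r : ℝ) ^ m| := by
  set A := 2 ^ m / (riemannZeta m).re
  have hζ : 1 < (riemannZeta m).re := one_lt_riemannZeta_natCast_re (by omega)
  have hA : 0 ≤ A := div_nonneg (by positivity) (by linarith)
  have hC : 0 < (m : ℝ) * (2 ^ m - A) :=
    mul_pos (by positivity) (sub_pos.2 (div_lt_self (by positivity) hζ))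
  obtain ⟨P, hP⟩ := eventually_atTop.1 <| tendsto_natCast_atTop_atTop.eventually <|
    eventually_mul_pow_le_shellJump (by omega) hA (half_lt_self hC)
  refine ⟨m * (2 ^ m - A) / 4, by positivity, fun N => ?_⟩
  obtain ⟨p, hpN, hp⟩ := Nat.exists_infinite_primes (max P (N + 1))
  have hjump : 2 * (m * (2 ^ m - A) / 4) * (p : ℝ) ^ (m - 1) ≤
      errorTerm m p - errorTerm m (p - 1) := by
    rw [errorTerm_sub_errorTerm_pred hp]
    linarith [hP p (le_of_max_le_left hpN)]
  rcases le_abs_or_le_abs_pred_of_le_sub (by positivity) hjump with h | h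
  · exact ⟨p, by omega, hp.pos, h⟩
  · exact ⟨p - 1, by omega, by have := hp.two_le; omega, h⟩
end

section
/- For all integers m ≥ 1 and all positive integers r, V_m(r) = (1/(2(m+1))) · ∑_{j=0}^{m+1} C(m+1, j) · 2^j · (1 − (−1)^{m+1−j}) · S_j(r), where S_0(r) = 0 and S_j(r) = j · ∑_{n=1}^{r} J_{j−1}(n) for j ≥ 1. -/
open Finset ArithmeticFunction
open scoped ArithmeticFunction.Moebius ArithmeticFunction.zeta

/-!
Both sides are Möbius sums over `d ≤ r`. Sieving by the gcd gives
`V_m(r) = ∑_{d ≤ r} μ(d) ((2⌊r/d⌋ + 1)^m - 1)`, and `J_k = μ * id^k` gives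
`∑_{n ≤ r} J_k(n) = ∑_{d ≤ r} μ(d) ∑_{q ≤ r/d} q^k`. It remains to see, for each `N`,
that `∑_j C(m+1,j) 2^j (1 - (-1)^(m+1-j)) j ∑_{q ≤ N} q^(j-1) = 2(m+1)((2N+1)^m - 1)`: for a
single `q` the inner sum over `j` is the derivative of `(2q+1)^(m+1) - (2q-1)^(m+1)`, that is
`2(m+1)((2q+1)^m - (2q-1)^m)`, and this telescopes over `q ≤ N`.
-/

/-- Jordan totient: number of `m`-tuples `x` with `1 ≤ xᵢ ≤ n` and `gcd(x₁,…,x_m,n) = 1`. -/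
def J (m n : ℕ) : ℕ :=
  ((Fintype.piFinset fun _ : Fin m => Finset.Icc (1 : ℕ) n).filter
    fun x => Nat.gcd (Finset.univ.gcd x) n = 1).card

/-- `S j r = j * ∑_{n=1}^r J_{j-1}(n)` for `j ≥ 1`, and `S 0 r = 0`. -/
def S (j r : ℕ) : ℕ := j * ∑ n ∈ Finset.Icc 1 r, J (j - 1) n

theorem sum_divisors_moebius (n : ℕ) :
    ∑ d ∈ n.divisors, (μ d : ℤ) = if n = 1 then 1 else 0 := by
  rw [← coe_mul_zeta_apply, moebius_mul_coe_zeta, one_apply]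

theorem filter_dvd_Icc_eq_divisors {n r : ℕ} (hn : 0 < n) (hnr : n ≤ r) :
    {d ∈ Icc 1 r | d ∣ n} = n.divisors := by
  ext d
  simp only [mem_filter, mem_Icc, Nat.mem_divisors]
  constructor
  · rintro ⟨-, hd⟩
    exact ⟨hd, hn.ne'⟩
  · rintro ⟨hd, -⟩
    exact ⟨⟨Nat.pos_of_dvd_of_pos hd hn, (Nat.le_of_dvd hn hd).trans hnr⟩, hd⟩

theorem card_filter_eq_one_eq_sum_moebius {α : Type*} (s : Finset α) (g : α → ℕ) {r : ℕ}
    (hg : ∀ a ∈ s, 0 < g a ∧ g a ≤ r) :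
    (#{a ∈ s | g a = 1} : ℤ) = ∑ d ∈ Icc 1 r, μ d * #{a ∈ s | d ∣ g a} := by
  calc (#{a ∈ s | g a = 1} : ℤ)
      = ∑ a ∈ s, ∑ d ∈ Icc 1 r, if d ∣ g a then (μ d : ℤ) else 0 := by
        rw [natCast_card_filter]
        refine sum_congr rfl fun a ha => ?_
        rw [← sum_filter, filter_dvd_Icc_eq_divisors (hg a ha).1 (hg a ha).2,
          sum_divisors_moebius]
    _ = ∑ d ∈ Icc 1 r, μ d * #{a ∈ s | d ∣ g a} := by
        rw [sum_comm]
        simp_rw [natCast_card_filter, mul_sum, mul_boole]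

theorem card_filter_piFinset_const_forall {ι α : Type*} [Fintype ι] [DecidableEq ι]
    (s : Finset α) (p : α → Prop) [DecidablePred p]
    [DecidablePred fun x : ι → α => ∀ i, p (x i)] :
    #{x ∈ Fintype.piFinset fun _ : ι => s | ∀ i, p (x i)}
      = #{y ∈ s | p y} ^ Fintype.card ι := by
  have : {x ∈ Fintype.piFinset fun _ : ι => s | ∀ i, p (x i)}
      = Fintype.piFinset fun _ => {y ∈ s | p y} := by
    ext x
    simp [Fintype.mem_piFinset, forall_and]
  simp [this]

theorem Nat.card_Icc_filter_dvd (n d : ℕ) : #{x ∈ Icc 1 n | d ∣ x} = n / d :=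
  Nat.Ioc_filter_dvd_card_eq_div n d

theorem Int.card_Icc_filter_dvd (r : ℕ) {d : ℕ} (hd : 0 < d) :
    #{x ∈ Icc (-(r : ℤ)) r | (d : ℤ) ∣ x} = 2 * (r / d) + 1 := by
  have hd' : (0 : ℤ) < d := by exact_mod_cast hd
  have : {x ∈ Icc (-(r : ℤ)) r | (d : ℤ) ∣ x}
      = (Icc (-((r / d : ℕ) : ℤ)) (r / d : ℕ)).image ((d : ℤ) * ·) := by
    ext x
    simp only [mem_filter, mem_Icc, mem_image, Int.natCast_div, neg_le,
      Int.le_ediv_iff_mul_le hd']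
    constructor
    · rintro ⟨⟨h1, h2⟩, t, rfl⟩
      exact ⟨t, ⟨by linarith, by linarith⟩, rfl⟩
    · rintro ⟨t, ⟨h1, h2⟩, rfl⟩
      exact ⟨⟨by linarith, by linarith⟩, dvd_mul_right _ _⟩
  rw [this, card_image_of_injective _ (mul_right_injective₀ hd'.ne'), Int.card_Icc]
  omega

theorem J_eq_sum_divisors_moebius (k : ℕ) {n : ℕ} (hn : 0 < n) :
    (J k n : ℤ) = ∑ d ∈ n.divisors, μ d * ((n / d : ℕ) : ℤ) ^ k := by
  have hcount (d : ℕ) :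
      #{x ∈ Fintype.piFinset (fun _ : Fin k => Icc 1 n) | d ∣ (univ.gcd x).gcd n}
        = if d ∣ n then (n / d) ^ k else 0 := by
    split_ifs with hd
    · rw [filter_congr (q := fun x => ∀ i, d ∣ x i) fun x _ => by
        simp [Nat.dvd_gcd_iff, Finset.dvd_gcd_iff, hd], card_filter_piFinset_const_forall,
        Nat.card_Icc_filter_dvd, Fintype.card_fin]
    · simp [Nat.dvd_gcd_iff, hd]
  rw [J, card_filter_eq_one_eq_sum_moebius (r := n) _ _ fun x _ =>
    ⟨Nat.gcd_pos_of_pos_right _ hn, Nat.le_of_dvd hn (Nat.gcd_dvd_right _ _)⟩,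
    ← filter_dvd_Icc_eq_divisors hn le_rfl, sum_filter]
  refine sum_congr rfl fun d _ => ?_
  rw [hcount]
  split_ifs <;> simp

theorem sum_J_eq_sum_moebius_mul_sum_pow (k r : ℕ) :
    (∑ n ∈ Icc 1 r, J k n : ℤ)
      = ∑ d ∈ Icc 1 r, μ d * ∑ q ∈ Icc 1 (r / d), (q : ℤ) ^ k := by
  have hIoc (N : ℕ) : Icc 1 N = Ioc 0 N := Icc_add_one_left_eq_Ioc 0 N
  have hJ : ∀ n ∈ Ioc 0 r, (J k n : ℤ) = (μ * (pow k : ArithmeticFunction ℤ)) n := by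
    intro n hn
    rw [J_eq_sum_divisors_moebius k (mem_Ioc.1 hn).1, mul_apply, Nat.sum_divisorsAntidiagonal
      (fun a b => (μ a : ℤ) * (pow k : ArithmeticFunction ℤ) b)]
    refine sum_congr rfl fun d hd => ?_
    rw [natCoe_apply, pow_apply, if_neg, Nat.cast_pow]
    exact fun h => (Nat.div_pos (Nat.divisor_le hd) (Nat.pos_of_mem_divisors hd)).ne' h.2
  simp_rw [hIoc]
  rw [sum_congr rfl hJ, sum_Ioc_mul_eq_sum_sum]
  refine sum_congr rfl fun d _ => ?_
  congr 1
  refine sum_congr rfl fun q hq => ?_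
  rw [natCoe_apply, pow_apply, if_neg (fun h => (mem_Ioc.1 hq).1.ne' h.2), Nat.cast_pow]

theorem Finset.natAbs_gcd_eq_one_iff {ι : Type*} (s : Finset ι) (f : ι → ℤ) :
    (s.gcd f).natAbs = 1 ↔ s.gcd f = 1 := by
  rw [Int.natAbs_eq_iff, or_iff_left]
  · rfl
  · have := Int.nonneg_of_normalize_eq_self (s.normalize_gcd (f := f))
    omega

theorem Finset.natAbs_gcd_pos_and_le {ι : Type*} {s : Finset ι} {f : ι → ℤ} {i : ι}
    (hi : i ∈ s) (hfi : f i ≠ 0) :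
    0 < (s.gcd f).natAbs ∧ (s.gcd f).natAbs ≤ (f i).natAbs := by
  have hdvd : (s.gcd f).natAbs ∣ (f i).natAbs := Int.natAbs_dvd_natAbs.2 (gcd_dvd hi)
  exact ⟨Nat.pos_of_dvd_of_pos hdvd (Int.natAbs_pos.2 hfi),
    Nat.le_of_dvd (Int.natAbs_pos.2 hfi) hdvd⟩

theorem Vm_eq_sum_moebius (m r : ℕ) :
    (Vm m r : ℤ) = ∑ d ∈ Icc 1 r, μ d * ((2 * (r / d : ℕ) + 1 : ℤ) ^ m - 1) := by
  set box := Fintype.piFinset fun _ : Fin m => Icc (-(r : ℤ)) r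
  -- The sieve runs over `box.erase 0`: the origin has gcd `0`, which no `d ∈ [1, r]` sieves out.
  have h0 : (0 : Fin m → ℤ) ∈ box := by simp [box]
  have hgcd0 : univ.gcd (0 : Fin m → ℤ) = 0 := gcd_eq_zero_iff.2 fun _ _ => rfl
  have hgcd_pos : ∀ x ∈ box.erase 0, 0 < (univ.gcd x).natAbs ∧ (univ.gcd x).natAbs ≤ r := by
    intro x hx
    obtain ⟨hx0, hx⟩ := mem_erase.1 hx
    obtain ⟨i, hi⟩ := Function.ne_iff.1 hx0
    obtain ⟨hpos, hle⟩ := natAbs_gcd_pos_and_le (mem_univ i) hi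
    have := mem_Icc.1 (Fintype.mem_piFinset.1 hx i)
    exact ⟨hpos, hle.trans (by omega)⟩
  have hVm : Vm m r = #{x ∈ box.erase 0 | (univ.gcd x).natAbs = 1} := by
    change #{x ∈ box | univ.gcd x = 1} = _
    rw [filter_erase, erase_eq_of_notMem (by simp [hgcd0])]
    simp_rw [natAbs_gcd_eq_one_iff]
  have hcount : ∀ d ∈ Icc 1 r,
      (#{x ∈ box.erase 0 | d ∣ (univ.gcd x).natAbs} : ℤ)
        = (2 * (r / d : ℕ) + 1 : ℤ) ^ m - 1 := by
    intro d hd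
    have hdvd : ∀ x : Fin m → ℤ, d ∣ (univ.gcd x).natAbs ↔ ∀ i, (d : ℤ) ∣ x i := by
      intro x
      simp [← Int.natCast_dvd, Finset.dvd_gcd_iff]
    rw [filter_erase, card_erase_of_mem (by simp [h0, hgcd0]), filter_congr fun x _ => hdvd x,
      card_filter_piFinset_const_forall, Int.card_Icc_filter_dvd r (mem_Icc.1 hd).1,
      Fintype.card_fin, Nat.cast_sub (Nat.one_le_pow _ _ (Nat.succ_pos _))]
    push_cast
    rfl
  rw [hVm, card_filter_eq_one_eq_sum_moebius _ _ hgcd_pos]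
  exact sum_congr rfl fun d hd => by rw [hcount d hd]

theorem add_one_pow_sub_sub_one_pow {R : Type*} [CommRing R] (m : ℕ) (x : R) :
    (x + 1) ^ m - (x - 1) ^ m
      = ∑ i ∈ range (m + 1), (m.choose i : R) * (1 - (-1) ^ (m - i)) * x ^ i := by
  rw [sub_eq_add_neg x, add_pow, add_pow, ← sum_sub_distrib]
  refine sum_congr rfl fun i _ => ?_
  ring

theorem sum_choose_mul_mul_pow_pred {R : Type*} [CommRing R] (m : ℕ) (q : R) :
    ∑ j ∈ range (m + 2),
        ((m + 1).choose j : R) * 2 ^ j * (1 - (-1) ^ (m + 1 - j)) * (j * q ^ (j - 1))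
      = 2 * (m + 1) * ((2 * q + 1) ^ m - (2 * q - 1) ^ m) := by
  rw [sum_range_succ', add_one_pow_sub_sub_one_pow, mul_sum]
  simp only [Nat.cast_zero, zero_mul, mul_zero, add_zero]
  refine sum_congr rfl fun i _ => ?_
  have hchoose : ((i + 1 : ℕ) : R) * (m + 1).choose (i + 1) = (m + 1) * m.choose i := by
    norm_cast
    rw [Nat.add_one_mul_choose_eq, mul_comm]
  rw [Nat.add_sub_add_right, Nat.add_sub_cancel]
  linear_combination (2 ^ (i + 1) * (1 - (-1) ^ (m - i)) * q ^ i) * hchoose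

theorem sum_Icc_two_mul_add_one_pow_sub {R : Type*} [CommRing R] (m N : ℕ) :
    ∑ q ∈ Icc 1 N, ((2 * q + 1 : R) ^ m - (2 * q - 1) ^ m) = (2 * N + 1) ^ m - 1 := by
  induction N with
  | zero => simp
  | succ N ih =>
    rw [sum_Icc_succ_top (Nat.le_add_left 1 N), ih]
    push_cast
    ring

theorem sum_choose_mul_sum_Icc_pow {R : Type*} [CommRing R] (m N : ℕ) :
    ∑ j ∈ range (m + 2), ((m + 1).choose j : R) * 2 ^ j * (1 - (-1) ^ (m + 1 - j)) *
        (j * ∑ q ∈ Icc 1 N, (q : R) ^ (j - 1))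
      = 2 * (m + 1) * ((2 * N + 1) ^ m - 1) := by
  simp_rw [mul_sum]
  rw [sum_comm]
  refine (sum_congr rfl fun (q : ℕ) _ => sum_choose_mul_mul_pow_pred m (q : R)).trans ?_
  rw [← mul_sum, sum_Icc_two_mul_add_one_pow_sub]

theorem two_mul_succ_mul_Vm (m r : ℕ) :
    2 * (m + 1) * (Vm m r : ℤ) = ∑ j ∈ range (m + 2),
      ((m + 1).choose j : ℤ) * 2 ^ j * (1 - (-1) ^ (m + 1 - j)) * S j r := by
  have hS (j : ℕ) :
      (S j r : ℤ)
        = ∑ d ∈ Icc 1 r, μ d * (j * ∑ q ∈ Icc 1 (r / d), (q : ℤ) ^ (j - 1)) := by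
    rw [S, Nat.cast_mul, Nat.cast_sum, sum_J_eq_sum_moebius_mul_sum_pow, mul_sum]
    exact sum_congr rfl fun d _ => mul_left_comm _ _ _
  simp only [hS, Vm_eq_sum_moebius, mul_sum (s := Icc 1 r)]
  rw [sum_comm]
  refine sum_congr rfl fun d _ => ?_
  rw [mul_left_comm, ← sum_choose_mul_sum_Icc_pow m (r / d), mul_sum]
  exact sum_congr rfl fun j _ => by ring

theorem Vm_eq_sum_S_general (m : ℕ) (r : ℕ) :
    (Vm m r : ℝ) = 1 / (2 * (m + 1)) *
      ∑ j ∈ Finset.range (m + 2),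
        ((m + 1).choose j : ℝ) * 2 ^ j * (1 - (-1 : ℝ) ^ (m + 1 - j)) * (S j r : ℝ) := by
  rw [one_div, eq_inv_mul_iff_mul_eq₀ (by positivity)]
  exact_mod_cast two_mul_succ_mul_Vm m r

theorem Vm_eq_sum_S (m : ℕ) (hm : 1 ≤ m) (r : ℕ) (hr : 0 < r) :
    (Vm m r : ℝ) = 1 / (2 * (m + 1)) *
      ∑ j ∈ Finset.range (m + 2),
        ((m + 1).choose j : ℝ) * 2 ^ j * (1 - (-1 : ℝ) ^ (m + 1 - j)) * (S j r : ℝ) :=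
  Vm_eq_sum_S_general m r
end

section
/- For all integers m ≥ 1 and n ≥ 1, the number of m-tuples (x_1,…,x_m) of integers with 1 ≤ x_i ≤ n for all i, gcd(x_1,…,x_m) = 1, and max_i x_i = n equals ∑_{j=0}^{m−1} (−1)^{m−1−j} · C(m, j) · J_j(n). -/
open Finset

def coprimeTuples (ι : Type*) [Fintype ι] [DecidableEq ι] (n : ℕ) : Finset (ι → ℕ) :=
  {x ∈ Fintype.piFinset fun _ : ι => Icc 1 n | Nat.gcd (univ.gcd x) n = 1}

section CoprimeTuples

variable {ι κ : Type*} [Fintype ι] [DecidableEq ι] [Fintype κ] [DecidableEq κ] {n : ℕ}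

theorem mem_coprimeTuples {x : ι → ℕ} :
    x ∈ coprimeTuples ι n ↔ (∀ i, x i ∈ Icc 1 n) ∧ Nat.gcd (univ.gcd x) n = 1 := by
  rw [coprimeTuples, mem_filter, Fintype.mem_piFinset]

theorem card_coprimeTuples_congr (e : ι ≃ κ) :
    #(coprimeTuples ι n) = #(coprimeTuples κ n) := by
  have gcd_comp (x : ι → ℕ) : univ.gcd (x ∘ e.symm) = univ.gcd x := by
    rw [← gcd_image, image_univ_equiv]
  refine card_nbij' (fun x => x ∘ e.symm) (fun y => y ∘ e) ?_ ?_ ?_ ?_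
  · intro x hx
    rw [mem_coe, mem_coprimeTuples] at hx ⊢
    exact ⟨fun k => hx.1 _, by rw [gcd_comp]; exact hx.2⟩
  · intro y hy
    rw [mem_coe, mem_coprimeTuples] at hy ⊢
    exact ⟨fun i => hy.1 _, by rw [← gcd_comp, Function.comp_assoc, e.self_comp_symm]; exact hy.2⟩
  · intro x _
    simp [Function.comp_assoc]
  · intro y _
    simp [Function.comp_assoc]

theorem J_card_eq_card_coprimeTuples :
    J (Fintype.card ι) n = #(coprimeTuples ι n) :=
  card_coprimeTuples_congr (Fintype.equivFin ι).symm

theorem gcd_univ_gcd_eq_of_forall_notMem {T : Finset ι} {x : ι → ℕ} (hx : ∀ i ∉ T, x i = n) :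
    Nat.gcd (univ.gcd x) n = Nat.gcd (T.gcd x) n := by
  apply Nat.dvd_antisymm
  · exact Nat.dvd_gcd ((Nat.gcd_dvd_left _ _).trans (gcd_mono (subset_univ T)))
      (Nat.gcd_dvd_right _ _)
  · refine Nat.dvd_gcd (dvd_gcd fun i _ => ?_) (Nat.gcd_dvd_right _ _)
    by_cases hi : i ∈ T
    · exact (Nat.gcd_dvd_left _ _).trans (Finset.gcd_dvd hi)
    · rw [hx i hi]
      exact Nat.gcd_dvd_right _ _

theorem card_filter_coprimeTuples_forall_notMem (hn : 1 ≤ n) (T : Finset ι) :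
    #{x ∈ coprimeTuples ι n | ∀ i ∉ T, x i = n} = #(coprimeTuples T n) := by
  have gcd_restrict (x : ι → ℕ) : univ.gcd (fun i : T => x i) = T.gcd x := by
    conv_rhs => rw [← T.attach_image_val, gcd_image]
    rfl
  refine card_nbij' (fun x i => x i) (fun y i => if h : i ∈ T then y ⟨i, h⟩ else n)
    ?_ ?_ ?_ ?_
  · intro x hx
    rw [mem_coe, mem_filter, mem_coprimeTuples] at hx
    rw [mem_coe, mem_coprimeTuples, gcd_restrict, ← gcd_univ_gcd_eq_of_forall_notMem hx.2]
    exact ⟨fun i => hx.1.1 i, hx.1.2⟩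
  · intro y hy
    rw [mem_coe, mem_coprimeTuples] at hy
    have hoff : ∀ i ∉ T, (fun i => if h : i ∈ T then y ⟨i, h⟩ else n) i = n := by
      intro i hi
      simp [hi]
    rw [mem_coe, mem_filter, mem_coprimeTuples, gcd_univ_gcd_eq_of_forall_notMem hoff,
      ← gcd_restrict]
    refine ⟨⟨fun i => ?_, by simpa using hy.2⟩, hoff⟩
    by_cases hi : i ∈ T
    · simpa [hi] using hy.1 ⟨i, hi⟩
    · simpa [hi] using hn
  · intro x hx
    rw [mem_coe, mem_filter] at hx
    ext i
    by_cases hi : i ∈ T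
    · simp [hi]
    · simp [hi, hx.2 i hi]
  · intro y _
    simp

theorem card_filter_coprimeTuples_forall_mem (hn : 1 ≤ n) (t : Finset ι) :
    #{x ∈ coprimeTuples ι n | ∀ i ∈ t, x i = n} = J (Fintype.card ι - #t) n := by
  rw [← card_compl, ← Fintype.card_coe tᶜ, J_card_eq_card_coprimeTuples,
    ← card_filter_coprimeTuples_forall_notMem hn]
  simp only [mem_compl, not_not]

theorem filter_gcd_eq_one_sup_eq_eq_biUnion :
    {x ∈ Fintype.piFinset fun _ : ι => Icc 1 n | univ.gcd x = 1 ∧ univ.sup x = n} =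
      univ.biUnion fun i => {x ∈ coprimeTuples ι n | x i = n} := by
  ext x
  simp only [mem_filter, mem_biUnion, mem_univ, true_and, mem_coprimeTuples,
    Fintype.mem_piFinset]
  constructor
  · rintro ⟨hx, hgcd, hsup⟩
    have hne : (univ : Finset ι).Nonempty := by
      by_contra h
      rw [not_nonempty_iff_eq_empty.1 h, gcd_empty] at hgcd
      exact zero_ne_one hgcd
    obtain ⟨i, -, hi⟩ := exists_mem_eq_sup univ hne x
    exact ⟨i, ⟨hx, by rw [hgcd, Nat.gcd_one_left]⟩, hi.symm.trans hsup⟩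
  · rintro ⟨i, ⟨hx, hgcd⟩, hi⟩
    have hdvd : univ.gcd x ∣ n := hi ▸ Finset.gcd_dvd (mem_univ i)
    refine ⟨hx, by rwa [Nat.gcd_eq_left hdvd] at hgcd, le_antisymm ?_ ?_⟩
    · exact Finset.sup_le fun j _ => (mem_Icc.1 (hx j)).2
    · exact hi ▸ le_sup (mem_univ i)

theorem card_filter_gcd_eq_one_sup_eq (hn : 1 ≤ n) :
    (#{x ∈ Fintype.piFinset fun _ : ι => Icc 1 n | univ.gcd x = 1 ∧ univ.sup x = n} : ℤ) =
      ∑ t ∈ (univ : Finset ι).powerset with t.Nonempty,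
        (-1 : ℤ) ^ (#t + 1) * J (Fintype.card ι - #t) n := by
  rw [filter_gcd_eq_one_sup_eq_eq_biUnion, inclusion_exclusion_card_biUnion,
    ← sum_coe_sort _ fun t => (-1 : ℤ) ^ (#t + 1) * J (Fintype.card ι - #t) n]
  refine sum_congr rfl fun t _ => ?_
  rw [← card_filter_coprimeTuples_forall_mem hn]
  congr 3
  ext x
  rw [mem_inf', mem_filter]
  obtain ⟨i, hi⟩ := (mem_filter.1 t.2).2
  simp only [mem_filter]
  exact ⟨fun h => ⟨(h i hi).1, fun j hj => (h j hj).2⟩, fun h j hj => ⟨h.1, h.2 j hj⟩⟩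

end CoprimeTuples

theorem sum_nonempty_powerset_eq_sum_range {β R : Type*} [CommRing R] (s : Finset β)
    (f : ℕ → R) :
    ∑ t ∈ s.powerset with t.Nonempty, (-1 : R) ^ (#t + 1) * f (#s - #t) =
      ∑ j ∈ range #s, (-1 : R) ^ (#s - 1 - j) * ((#s).choose j : R) * f j := by
  rw [sum_filter]
  simp_rw [← card_pos]
  rw [sum_powerset_apply_card (fun k => if 0 < k then (-1 : R) ^ (k + 1) * f (#s - k) else 0),
    sum_range_succ', ← sum_range_reflect]
  simp only [Nat.succ_pos, if_true, lt_irrefl, if_false, smul_zero, add_zero, nsmul_eq_mul]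
  refine sum_congr rfl fun j hj => ?_
  have hj : j < #s := mem_range.1 hj
  rw [show #s - 1 - j + 1 = #s - j by omega, Nat.choose_symm hj.le, Nat.sub_sub_self hj.le,
    show #s - j + 1 = (#s - 1 - j) + 2 by omega, pow_add]
  ring

theorem count_visible_with_max_eq_general (m n : ℕ) (hn : 1 ≤ n) :
    ((((Fintype.piFinset fun _ : Fin m => Finset.Icc (1 : ℕ) n).filter
        fun x => Finset.univ.gcd x = 1 ∧ Finset.univ.sup x = n).card : ℤ)) =
      ∑ j ∈ Finset.range m, (-1 : ℤ) ^ (m - 1 - j) * (m.choose j : ℤ) * (J j n : ℤ) := by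
  rw [card_filter_gcd_eq_one_sup_eq hn, Fintype.card_fin]
  simpa only [card_univ, Fintype.card_fin] using
    sum_nonempty_powerset_eq_sum_range (univ : Finset (Fin m)) fun j => (J j n : ℤ)

theorem count_visible_with_max_eq (m n : ℕ) (hm : 1 ≤ m) (hn : 1 ≤ n) :
    ((((Fintype.piFinset fun _ : Fin m => Finset.Icc (1 : ℕ) n).filter
        fun x => Finset.univ.gcd x = 1 ∧ Finset.univ.sup x = n).card : ℤ)) =
      ∑ j ∈ Finset.range m, (-1 : ℤ) ^ (m - 1 - j) * (m.choose j : ℤ) * (J j n : ℤ) :=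
  count_visible_with_max_eq_general m n hn
end

section
/- For every integer m ≥ 2, ∑_{d ≤ r} μ(d) (r/d)^m {r/d} = Ω(r^m); that is, there exist a constant c > 0 and infinitely many positive integers r such that |∑_{d=1}^{r} μ(d) (r/d)^m {r/d}| ≥ c · r^m. -/
/-!
Take `r ≡ -1 (mod 2520)`. Since `2520 = lcm(1, …, 10)`, `{r/d} = 1 - 1/d` for every `d ≤ 10`, so
the first ten terms are explicit: the term `-(r/2)^m/2` of `d = 2` is reinforced by the negative
terms of `d = 3, 5, 7`, which also absorb the positive ones of `d = 6, 10`. The terms with `d > 10`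
are bounded in absolute value by `r^m ∑_{d > 10} d^{-m} ≤ r^m / 10^(m-1)`, which for `m ≥ 2` is at
most four fifths of `(r/2)^m/2`.
-/

open Finset ArithmeticFunction

theorem Int.fract_natCast_div_of_dvd_add_one {k : Type*} [Field k] [LinearOrder k]
    [IsStrictOrderedRing k] [FloorRing k] {r d : ℕ} (h : d ∣ r + 1) :
    Int.fract ((r : k) / d) = 1 - (d : k)⁻¹ := by
  obtain ⟨q, hq⟩ := h
  have hd : (1 : k) ≤ d := by exact_mod_cast Nat.pos_of_dvd_of_pos ⟨q, hq⟩ r.succ_pos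
  have hq' : (r : k) + 1 = d * q := by exact_mod_cast hq
  refine Int.fract_eq_iff.2 ⟨sub_nonneg.2 (inv_le_one_of_one_le₀ hd),
    sub_lt_self _ (inv_pos.2 (zero_lt_one.trans_le hd)), q - 1, ?_⟩
  push_cast
  field_simp
  linear_combination hq'

theorem sum_Ioc_div_pow_le {x : ℝ} (hx : 0 ≤ x) {m K n : ℕ} (hm : 2 ≤ m) (hK : K ≠ 0)
    (hKn : K ≤ n) : ∑ d ∈ Ioc K n, (x / d) ^ m ≤ x ^ m / K ^ (m - 1) := by
  obtain ⟨m, rfl⟩ := Nat.exists_eq_add_of_le' hm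
  have hK0 : (0 : ℝ) < K := by positivity
  calc ∑ d ∈ Ioc K n, (x / d) ^ (m + 2)
      ≤ ∑ d ∈ Ioc K n, x ^ (m + 2) / K ^ m * ((d : ℝ) ^ 2)⁻¹ := by
        refine sum_le_sum fun d hd => ?_
        have hKd : (K : ℝ) ≤ d := by exact_mod_cast (mem_Ioc.1 hd).1.le
        rw [div_pow, pow_add (d : ℝ) m 2, ← div_div, div_eq_mul_inv _ ((d : ℝ) ^ 2)]
        gcongr
    _ = x ^ (m + 2) / K ^ m * ∑ d ∈ Ioc K n, ((d : ℝ) ^ 2)⁻¹ := (mul_sum ..).symm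
    _ ≤ x ^ (m + 2) / K ^ m * (K : ℝ)⁻¹ := by
        gcongr
        exact (sum_Ioc_inv_sq_le_sub hK hKn).trans (sub_le_self _ (by positivity))
    _ = x ^ (m + 2) / K ^ (m + 2 - 1) := by
        rw [show m + 2 - 1 = m + 1 by omega, pow_succ (K : ℝ), ← div_div, div_eq_mul_inv _ (K : ℝ)]

theorem sum_Icc_one_ten_moebius_mul {M : Type*} [AddCommGroup M] (f : ℕ → M) :
    ∑ d ∈ Icc 1 10, moebius d • f d = f 1 - f 2 - f 3 - f 5 + f 6 - f 7 + f 10 := by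
  simp [sum_Icc_succ_top, moebius, cardFactors_apply, Nat.primeFactorsList_ofNat,
    Nat.squarefree_iff_nodup_primeFactorsList, sub_eq_add_neg, add_assoc]

theorem sum_Icc_moebius_mul_div_pow_mul_one_sub_inv_le {x : ℝ} (hx : 0 ≤ x) {m : ℕ}
    (hm : 2 ≤ m) :
    ∑ d ∈ Icc 1 10, (moebius d : ℝ) * (x / d) ^ m * (1 - (d : ℝ)⁻¹) ≤ -((x / 2) ^ m / 2) := by
  have halve {y : ℝ} (hy : 0 ≤ y) : (y / 2) ^ m ≤ y ^ m / 4 := by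
    rw [div_pow]
    gcongr
    calc (4 : ℝ) = 2 ^ 2 := by norm_num
      _ ≤ 2 ^ m := pow_le_pow_right₀ one_le_two hm
  -- the positive terms of `d = 6, 10` are dominated by the negative ones of `d = 3, 5`
  have h6 := halve (y := x / 3) (by positivity)
  have h10 := halve (y := x / 5) (by positivity)
  have h3 : 0 ≤ (x / 3) ^ m := by positivity
  have h5 : 0 ≤ (x / 5) ^ m := by positivity
  have h7 : 0 ≤ (x / 7) ^ m := by positivity
  have expand := sum_Icc_one_ten_moebius_mul fun d => (x / d) ^ m * (1 - (d : ℝ)⁻¹)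
  simp only [zsmul_eq_mul, ← mul_assoc] at expand
  rw [expand]
  rw [div_div] at h6 h10
  norm_num at h6 h10 ⊢
  linarith

noncomputable def moebiusFractTerm (m r d : ℕ) : ℝ :=
  (moebius d : ℝ) * ((r : ℝ) / d) ^ m * Int.fract ((r : ℝ) / d)

theorem abs_moebiusFractTerm_le (m r d : ℕ) : |moebiusFractTerm m r d| ≤ ((r : ℝ) / d) ^ m := by
  have hμ : |(moebius d : ℝ)| ≤ 1 := by exact_mod_cast abs_moebius_le_one
  have hfract : |Int.fract ((r : ℝ) / d)| ≤ 1 := by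
    rw [abs_of_nonneg (Int.fract_nonneg _)]
    exact (Int.fract_lt_one _).le
  rw [moebiusFractTerm, abs_mul, abs_mul, abs_of_nonneg (by positivity : (0 : ℝ) ≤ (r / d) ^ m)]
  calc |(moebius d : ℝ)| * ((r : ℝ) / d) ^ m * |Int.fract ((r : ℝ) / d)|
      ≤ 1 * ((r : ℝ) / d) ^ m * 1 := by gcongr
    _ = ((r : ℝ) / d) ^ m := by ring

theorem abs_sum_Ioc_moebiusFractTerm_le {m K r : ℕ} (hm : 2 ≤ m) (hK : K ≠ 0) (hKr : K ≤ r) :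
    |∑ d ∈ Ioc K r, moebiusFractTerm m r d| ≤ (r : ℝ) ^ m / K ^ (m - 1) :=
  calc |∑ d ∈ Ioc K r, moebiusFractTerm m r d|
      ≤ ∑ d ∈ Ioc K r, ((r : ℝ) / d) ^ m :=
        (abs_sum_le_sum_abs _ _).trans (sum_le_sum fun d _ => abs_moebiusFractTerm_le m r d)
    _ ≤ (r : ℝ) ^ m / K ^ (m - 1) := sum_Ioc_div_pow_le r.cast_nonneg hm hK hKr

theorem sum_Icc_moebiusFractTerm_le {m r : ℕ} (hm : 2 ≤ m) (hr : 2520 ∣ r + 1) :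
    ∑ d ∈ Icc 1 10, moebiusFractTerm m r d ≤ -(((r : ℝ) / 2) ^ m / 2) := by
  have hdvd : ∀ d ∈ Icc 1 10, d ∣ r + 1 := fun d hd =>
    (show d ∣ 2520 by revert d; decide).trans hr
  calc ∑ d ∈ Icc 1 10, moebiusFractTerm m r d
      = ∑ d ∈ Icc 1 10, (moebius d : ℝ) * ((r : ℝ) / d) ^ m * (1 - (d : ℝ)⁻¹) :=
        sum_congr rfl fun d hd => by
          rw [moebiusFractTerm, Int.fract_natCast_div_of_dvd_add_one (hdvd d hd)]
    _ ≤ -(((r : ℝ) / 2) ^ m / 2) :=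
        sum_Icc_moebius_mul_div_pow_mul_one_sub_inv_le r.cast_nonneg hm

theorem pow_div_ten_pow_le {x : ℝ} (hx : 0 ≤ x) {m : ℕ} (hm : 2 ≤ m) :
    x ^ m / 10 ^ (m - 1) ≤ 4 / 5 * ((x / 2) ^ m / 2) := by
  obtain ⟨k, rfl⟩ := Nat.exists_eq_add_of_le' hm
  calc x ^ (k + 2) / 10 ^ (k + 2 - 1) = x ^ (k + 2) / (10 * 10 ^ k) := by
        rw [show k + 2 - 1 = k + 1 by omega, pow_succ' (10 : ℝ)]
    _ ≤ x ^ (k + 2) / (10 * 2 ^ k) := by gcongr; norm_num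
    _ = 4 / 5 * ((x / 2) ^ (k + 2) / 2) := by rw [div_pow]; field_simp; ring

theorem moebius_fract_sum_omega (m : ℕ) (hm : 2 ≤ m) :
    ∃ c : ℝ, 0 < c ∧ ∀ N : ℕ, ∃ r : ℕ, N ≤ r ∧ 0 < r ∧
      c * (r : ℝ) ^ m ≤
        |∑ d ∈ Finset.Icc 1 r,
          (ArithmeticFunction.moebius d : ℝ) * ((r : ℝ) / d) ^ m * Int.fract ((r : ℝ) / d)| := by
  refine ⟨1 / (5 * 2 ^ (m + 1)), by positivity, fun N => ⟨2520 * N + 2519, by omega, by omega, ?_⟩⟩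
  set r := 2520 * N + 2519
  have h10r : 10 ≤ r := by omega
  have hsplit : ∑ d ∈ Icc 1 r, moebiusFractTerm m r d
      = ∑ d ∈ Icc 1 10, moebiusFractTerm m r d + ∑ d ∈ Ioc 10 r, moebiusFractTerm m r d :=
    (sum_Ioc_consecutive _ (Nat.zero_le 10) h10r).symm
  have head := sum_Icc_moebiusFractTerm_le hm (show 2520 ∣ r + 1 from ⟨N + 1, by omega⟩)
  have tail := le_of_abs_le (abs_sum_Ioc_moebiusFractTerm_le hm (by norm_num) h10r)
  have tail_small := pow_div_ten_pow_le r.cast_nonneg hm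
  change _ ≤ |∑ d ∈ Icc 1 r, moebiusFractTerm m r d|
  rw [hsplit]
  calc 1 / (5 * 2 ^ (m + 1)) * (r : ℝ) ^ m = 1 / 5 * (((r : ℝ) / 2) ^ m / 2) := by
        rw [div_pow]; ring
    _ ≤ -(∑ d ∈ Icc 1 10, moebiusFractTerm m r d + ∑ d ∈ Ioc 10 r, moebiusFractTerm m r d) := by
        linarith
    _ ≤ _ := neg_le_abs _
end

section
/- For every integer m ≥ 4 and every odd integer r ≥ 3, ∑_{d=1}^{r} (μ(d)/d^m) {r/d} ≤ −1/2^{m+1} + ζ(m) − 1 − 1/2^m, and this upper bound is negative (equivalently, ζ(m) − 1 − 1/2^m < 1/2^{m+1} for all m ≥ 4). -/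
/-!
The terms d = 1 and d = 2 are exact: {r/1} = 0 and, r being odd, {r/2} = 1/2, which gives
-1/2^{m+1}. Every other term is at most 1/d^m since μ(d) ≤ 1 and 0 ≤ {r/d} < 1, so they sum to at
most ζ(m) - 1 - 1/2^m. For negativity, n^{-m} ≤ 2^{4-m} n^{-4} for n ≥ 3 bounds that tail by
2^{4-m} (π⁴/90 - 1 - 1/16), and π⁴/90 - 1 - 1/16 < 1/32.
-/

open Finset ArithmeticFunction
open scoped ArithmeticFunction.Moebius

theorem ArithmeticFunction.moebius_div_pow_mul_fract_le (d m : ℕ) (x : ℝ) :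
    (μ d : ℝ) / (d : ℝ) ^ m * Int.fract x ≤ 1 / (d : ℝ) ^ m := by
  have hμ : (μ d : ℝ) ≤ 1 := by exact_mod_cast (abs_le.mp abs_moebius_le_one).2
  calc (μ d : ℝ) / (d : ℝ) ^ m * Int.fract x
      ≤ 1 / (d : ℝ) ^ m * Int.fract x := by gcongr
    _ ≤ 1 / (d : ℝ) ^ m := mul_le_of_le_one_right (by positivity) (Int.fract_lt_one x).le

theorem Int.fract_natCast_div_two_of_odd {K : Type*} [Field K] [LinearOrder K]
    [IsStrictOrderedRing K] [FloorRing K] {r : ℕ} (hr : Odd r) :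
    Int.fract ((r : K) / 2) = 1 / 2 := by
  rw [← Nat.cast_two, Int.fract_div_natCast_eq_div_natCast_mod, Nat.odd_iff.mp hr, Nat.cast_one]

theorem re_riemannZeta_natCast_eq_tsum {m : ℕ} (hm : 1 < m) :
    (riemannZeta m).re = ∑' n : ℕ, 1 / (n : ℝ) ^ m := by
  have hcast (n : ℕ) : 1 / (n : ℂ) ^ m = ((1 / (n : ℝ) ^ m : ℝ) : ℂ) := by push_cast; rfl
  simp_rw [zeta_nat_eq_tsum_of_gt_one hm, hcast, ← Complex.ofReal_tsum, Complex.ofReal_re]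

theorem re_riemannZeta_natCast_sub_eq_tsum {m : ℕ} (hm : 1 < m) :
    (riemannZeta m).re - 1 - 1 / 2 ^ m = ∑' n : ℕ, 1 / ((n + 3 : ℕ) : ℝ) ^ m := by
  have hsplit := (Real.summable_one_div_nat_pow.mpr hm).sum_add_tsum_nat_add 3
  rw [re_riemannZeta_natCast_eq_tsum hm, ← hsplit, sum_range_succ, sum_range_succ, sum_range_one]
  push_cast
  rw [zero_pow (by omega), div_zero, one_pow, div_one]
  ring

theorem sum_Icc_three_one_div_pow_le_tsum {m : ℕ} (hm : 1 < m) (r : ℕ) :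
    ∑ d ∈ Icc 3 r, 1 / (d : ℝ) ^ m ≤ ∑' n : ℕ, 1 / ((n + 3 : ℕ) : ℝ) ^ m := by
  rw [← Ico_add_one_right_eq_Icc, sum_Ico_eq_sum_range]
  simp_rw [add_comm 3]
  exact ((summable_nat_add_iff 3).mpr (Real.summable_one_div_nat_pow.mpr hm)).sum_le_tsum _
    fun _ _ => by positivity

theorem tsum_one_div_add_three_pow_le {m : ℕ} (hm : 4 ≤ m) :
    ∑' n : ℕ, 1 / ((n + 3 : ℕ) : ℝ) ^ m ≤
      (1 / 2) ^ (m - 4) * ∑' n : ℕ, 1 / ((n + 3 : ℕ) : ℝ) ^ 4 := by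
  have hsum (k : ℕ) (hk : 1 < k) : Summable fun n : ℕ => 1 / ((n + 3 : ℕ) : ℝ) ^ k :=
    (summable_nat_add_iff 3).mpr (Real.summable_one_div_nat_pow.mpr hk)
  rw [← tsum_mul_left]
  refine (hsum m (by omega)).tsum_le_tsum (fun n => ?_) ((hsum 4 (by norm_num)).mul_left _)
  have h2 : (2 : ℝ) ≤ ((n + 3 : ℕ) : ℝ) := by push_cast; linarith [n.cast_nonneg (α := ℝ)]
  calc 1 / ((n + 3 : ℕ) : ℝ) ^ m
      = 1 / ((n + 3 : ℕ) : ℝ) ^ (m - 4) * (1 / ((n + 3 : ℕ) : ℝ) ^ 4) := by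
        rw [one_div_mul_one_div, ← pow_add, Nat.sub_add_cancel hm]
    _ ≤ (1 / 2) ^ (m - 4) * (1 / ((n + 3 : ℕ) : ℝ) ^ 4) := by
        rw [← one_div_pow]; gcongr

theorem tsum_one_div_add_three_pow_four_lt :
    ∑' n : ℕ, 1 / ((n + 3 : ℕ) : ℝ) ^ 4 < 1 / 32 := by
  have hζ := re_riemannZeta_natCast_sub_eq_tsum (m := 4) (by norm_num)
  have h4 : (riemannZeta (4 : ℕ)).re = Real.pi ^ 4 / 90 := by
    rw [Nat.cast_ofNat, riemannZeta_four]; exact_mod_cast Complex.ofReal_re _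
  have hπ : Real.pi ^ 4 < 3.1416 ^ 4 := by gcongr; exact Real.pi_lt_d4
  rw [← hζ, h4]
  linarith

theorem re_riemannZeta_natCast_sub_lt {m : ℕ} (hm : 4 ≤ m) :
    (riemannZeta m).re - 1 - 1 / 2 ^ m < 1 / 2 ^ (m + 1) := by
  rw [re_riemannZeta_natCast_sub_eq_tsum (by omega)]
  calc ∑' n : ℕ, 1 / ((n + 3 : ℕ) : ℝ) ^ m
      ≤ (1 / 2) ^ (m - 4) * ∑' n : ℕ, 1 / ((n + 3 : ℕ) : ℝ) ^ 4 := tsum_one_div_add_three_pow_le hm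
    _ < (1 / 2) ^ (m - 4) * (1 / 32) := by gcongr; exact tsum_one_div_add_three_pow_four_lt
    _ = 1 / 2 ^ (m + 1) := by
        rw [show m + 1 = m - 4 + 5 by omega, pow_add, one_div_pow]; ring

theorem sum_moebius_div_pow_mul_fract_le {m r : ℕ} (hm : 1 < m) (hr : 2 ≤ r) (hodd : Odd r) :
    ∑ d ∈ Icc 1 r, (μ d : ℝ) / (d : ℝ) ^ m * Int.fract ((r : ℝ) / d) ≤
      -1 / 2 ^ (m + 1) + (riemannZeta m).re - 1 - 1 / 2 ^ m := by
  rw [Icc_eq_cons_Ioc (by omega), sum_cons, ← Icc_add_one_left_eq_Ioc,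
    Icc_eq_cons_Ioc (by omega), sum_cons, ← Icc_add_one_left_eq_Ioc]
  simp only [Nat.reduceAdd]
  have hd₁ : (μ 1 : ℝ) / ((1 : ℕ) : ℝ) ^ m * Int.fract ((r : ℝ) / (1 : ℕ)) = 0 := by simp
  have hd₂ : (μ 2 : ℝ) / ((2 : ℕ) : ℝ) ^ m * Int.fract ((r : ℝ) / (2 : ℕ)) =
      -1 / 2 ^ (m + 1) := by
    rw [moebius_apply_prime Nat.prime_two, Nat.cast_ofNat, Int.fract_natCast_div_two_of_odd hodd,
      pow_succ]
    push_cast; ring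
  have hrest := (sum_le_sum fun d _ => moebius_div_pow_mul_fract_le d m ((r : ℝ) / d)).trans
    (sum_Icc_three_one_div_pow_le_tsum hm r)
  rw [hd₁, hd₂]
  linarith [re_riemannZeta_natCast_sub_eq_tsum hm]

theorem moebius_fract_sum_neg_of_odd (m : ℕ) (hm : 4 ≤ m) (r : ℕ) (hr : 3 ≤ r) (hodd : Odd r) :
    (∑ d ∈ Finset.Icc 1 r,
        (ArithmeticFunction.moebius d : ℝ) / (d : ℝ) ^ m * Int.fract ((r : ℝ) / d)) ≤
      -1 / 2 ^ (m + 1) + (riemannZeta m).re - 1 - 1 / 2 ^ m ∧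
    (riemannZeta m).re - 1 - 1 / 2 ^ m < 1 / 2 ^ (m + 1) :=
  ⟨sum_moebius_div_pow_mul_fract_le (by omega) (by omega) hodd, re_riemannZeta_natCast_sub_lt hm⟩
end

section
/- For every integer i ≥ 3, the quantity X^i(r) := i · ∑_{n=1}^{r} J_{i−1}(n) satisfies X^i(r) = r^i/ζ(i) + Ω(r^{i−1}); that is, there exist a constant c > 0 and infinitely many positive integers r such that |i · ∑_{n=1}^{r} J_{i−1}(n) − r^i/ζ(i)| ≥ c · r^{i−1}. -/
lemma J_prime {m p : ℕ} (hm : 0 < m) (hp : p.Prime) : J m p + 1 = p ^ m := by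
  classical
  set T := Fintype.piFinset fun _ : Fin m => Finset.Icc (1 : ℕ) p with hT
  have hcardT : T.card = p ^ m := by
    simp [hT, Fintype.card_piFinset, Nat.card_Icc]
  have hneg : T.filter (fun x => ¬ Nat.gcd (Finset.univ.gcd x) p = 1) = {fun _ => p} := by
    ext x
    simp only [Finset.mem_filter, Finset.mem_singleton, hT, Fintype.mem_piFinset,
      Finset.mem_Icc]
    constructor
    · rintro ⟨hx, hg⟩
      have hdvd : p ∣ Finset.univ.gcd x := by
        by_contra hnd
        exact hg ((Nat.coprime_comm.mp (hp.coprime_iff_not_dvd.mpr hnd)))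
      funext j
      have h1 : p ∣ x j := hdvd.trans (Finset.gcd_dvd (Finset.mem_univ j))
      exact Nat.le_antisymm (hx j).2 (Nat.le_of_dvd (hx j).1 h1)
    · rintro rfl
      refine ⟨fun j => ⟨hp.one_lt.le, le_rfl⟩, ?_⟩
      have hg : Finset.univ.gcd (fun _ : Fin m => p) = p := by
        apply Nat.dvd_antisymm
        · exact Finset.gcd_dvd (Finset.mem_univ ⟨0, hm⟩)
        · exact Finset.dvd_gcd fun j _ => dvd_rfl
      rw [hg, Nat.gcd_self]
      exact hp.ne_one
  have := Finset.card_filter_add_card_filter_not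
    (s := T) (p := fun x => Nat.gcd (Finset.univ.gcd x) p = 1)
  rw [hneg, Finset.card_singleton] at this
  rw [hcardT] at this
  exact this

lemma one_lt_zeta_re {i : ℕ} (hi : 3 ≤ i) : 1 < (riemannZeta i).re := by
  have hi1 : 1 < i := by omega
  have hsumR : Summable (fun n : ℕ => 1 / (n : ℝ) ^ i) :=
    Real.summable_one_div_nat_pow.mpr (by omega)
  have hre : ∀ n : ℕ, (1 / (n : ℂ) ^ i).re = 1 / (n : ℝ) ^ i := by
    intro n
    rw [← Complex.ofReal_natCast, ← Complex.ofReal_pow, ← Complex.ofReal_one,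
      ← Complex.ofReal_div, Complex.ofReal_re]
  have hsumC : Summable (fun n : ℕ => 1 / (n : ℂ) ^ i) := by
    apply Summable.of_norm
    refine hsumR.congr fun n => ?_
    rw [norm_div, norm_one, norm_pow, Complex.norm_natCast]
  rw [zeta_nat_eq_tsum_of_gt_one hi1, Complex.re_tsum hsumC]
  have h2 : (0:ℝ) < 1 / (2:ℝ) ^ i := by positivity
  have hle : ∑ n ∈ ({1, 2} : Finset ℕ), (1 / (n : ℂ) ^ i).re ≤ ∑' n : ℕ, (1 / (n : ℂ) ^ i).re := by
    apply Summable.sum_le_tsum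
    · intro n _
      rw [hre]; positivity
    · exact hsumR.congr fun n => (hre n).symm
  have : ∑ n ∈ ({1, 2} : Finset ℕ), (1 / (n : ℂ) ^ i).re = 1 + 1 / (2:ℝ) ^ i := by
    rw [Finset.sum_insert (by norm_num), Finset.sum_singleton, hre, hre]
    norm_num
  rw [this] at hle
  linarith

lemma pow_sub_one_pow_le (x : ℝ) (hx : 1 ≤ x) (n : ℕ) :
    x ^ n - (x - 1) ^ n ≤ n * x ^ (n - 1) := by
  have key := geom_sum₂_mul x (x - 1) n
  rw [sub_sub_cancel, mul_one] at key
  rw [← key]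
  calc ∑ k ∈ Finset.range n, x ^ k * (x - 1) ^ (n - 1 - k)
      ≤ ∑ k ∈ Finset.range n, x ^ (n - 1) := by
        apply Finset.sum_le_sum
        intro k hk
        have hk' : k < n := Finset.mem_range.mp hk
        have h1 : (x - 1) ^ (n - 1 - k) ≤ x ^ (n - 1 - k) :=
          pow_le_pow_left₀ (by linarith) (by linarith) _
        calc x ^ k * (x - 1) ^ (n - 1 - k) ≤ x ^ k * x ^ (n - 1 - k) := by
              apply mul_le_mul_of_nonneg_left h1 (by positivity)
          _ = x ^ (n - 1) := by
              rw [← pow_add]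
              congr 1
              omega
    _ = n * x ^ (n - 1) := by rw [Finset.sum_const, Finset.card_range, nsmul_eq_mul]

theorem jordan_sum_asymptotic_omega (i : ℕ) (hi : 3 ≤ i) :
    ∃ c : ℝ, 0 < c ∧ ∀ N : ℕ, ∃ r : ℕ, N ≤ r ∧ 0 < r ∧
      c * (r : ℝ) ^ (i - 1) ≤
        |(i : ℝ) * ∑ n ∈ Finset.Icc 1 r, (J (i - 1) n : ℝ) -
          (r : ℝ) ^ i / (riemannZeta i).re| := by
  set z := (riemannZeta i).re with hzdef
  have hz1 : 1 < z := one_lt_zeta_re hi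
  have hz0 : 0 < z := by linarith
  obtain ⟨δ, hδdef⟩ : ∃ d : ℝ, d = 1 - 1/z := ⟨_, rfl⟩
  have hδ : 0 < δ := by
    rw [hδdef]
    have : 1/z < 1 := by rw [div_lt_one hz0]; exact hz1
    linarith
  have hipos : (0:ℝ) < i := by positivity
  have hc : (0:ℝ) < (i : ℝ) * δ / 4 := by positivity
  refine ⟨(i : ℝ) * δ / 4, hc, fun N => ?_⟩
  obtain ⟨p, hpK, hp⟩ := Nat.exists_infinite_primes (max (N + 1) (⌈2/δ⌉₊ + 1))
  have hpN : N + 1 ≤ p := le_trans (le_max_left _ _) hpK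
  have hp2 : 2 ≤ p := hp.two_le
  have hp1R : (1:ℝ) ≤ (p:ℝ) := by exact_mod_cast Nat.one_le_of_lt hp2
  have hpC : (2/δ : ℝ) ≤ (p:ℝ) := by
    have h1 : ⌈2/δ⌉₊ + 1 ≤ p := le_trans (le_max_right _ _) hpK
    calc (2/δ : ℝ) ≤ (⌈2/δ⌉₊ : ℝ) := Nat.le_ceil _
      _ ≤ (p:ℝ) := by exact_mod_cast Nat.le_of_succ_le h1
  obtain ⟨E, hE⟩ : ∃ E : ℕ → ℝ, ∀ r : ℕ,
      E r = (i : ℝ) * ∑ n ∈ Finset.Icc 1 r, (J (i - 1) n : ℝ) - (r : ℝ) ^ i / z :=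
    ⟨_, fun _ => rfl⟩
  -- the jump
  have hJp : (J (i - 1) p : ℝ) + 1 = (p:ℝ) ^ (i - 1) := by
    exact_mod_cast congrArg (Nat.cast : ℕ → ℝ) (J_prime (by omega) hp)
  have hsplit : ∑ n ∈ Finset.Icc 1 p, (J (i - 1) n : ℝ)
      = ∑ n ∈ Finset.Icc 1 (p - 1), (J (i - 1) n : ℝ) + (J (i - 1) p : ℝ) := by
    have hpe : p - 1 + 1 = p := by omega
    rw [← hpe, Finset.sum_Icc_succ_top (by omega), Nat.add_sub_cancel]
  have hcast : ((p - 1 : ℕ) : ℝ) = (p : ℝ) - 1 := by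
    have h1 : (1:ℕ) ≤ p := by omega
    push_cast [h1]; ring
  have hpowle : (p:ℝ) ^ i - ((p - 1 : ℕ) : ℝ) ^ i ≤ (i:ℝ) * (p:ℝ) ^ (i - 1) := by
    rw [hcast]; exact pow_sub_one_pow_le (p:ℝ) hp1R i
  have hself : (p:ℝ) ≤ (p:ℝ) ^ (i - 1) := by
    calc (p:ℝ) = (p:ℝ) ^ 1 := (pow_one _).symm
      _ ≤ (p:ℝ) ^ (i - 1) := pow_le_pow_right₀ hp1R (by omega)
  have hjump : 2 * ((i:ℝ) * δ / 4) * (p:ℝ) ^ (i - 1) ≤ E p - E (p - 1) := by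
    have hEp : E p - E (p - 1)
        = (i:ℝ) * (J (i - 1) p : ℝ) - ((p:ℝ) ^ i - ((p - 1 : ℕ) : ℝ) ^ i) / z := by
      rw [hE p, hE (p - 1), hsplit]
      ring
    rw [hEp]
    have h1 : ((p:ℝ) ^ i - ((p - 1 : ℕ) : ℝ) ^ i) / z ≤ (i:ℝ) * (p:ℝ) ^ (i - 1) / z := by
      gcongr
    have h2 : (i:ℝ) * (J (i - 1) p : ℝ) = (i:ℝ) * ((p:ℝ) ^ (i - 1) - 1) := by
      rw [← hJp]; ring
    have hδp : 2 ≤ δ * (p:ℝ) ^ (i - 1) := by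
      have h3 : 2/δ ≤ (p:ℝ) ^ (i - 1) := hpC.trans hself
      have h4 := mul_le_mul_of_nonneg_left h3 hδ.le
      rwa [mul_div_cancel₀ 2 hδ.ne'] at h4
    have key : (i:ℝ) * ((p:ℝ) ^ (i - 1) - 1) - (i:ℝ) * (p:ℝ) ^ (i - 1) / z
        = (i:ℝ) * (δ * (p:ℝ) ^ (i - 1)) - (i:ℝ) := by
      rw [hδdef]; field_simp; ring
    have hAQ := mul_le_mul_of_nonneg_left hδp hipos.le
    have heq : 2 * ((i:ℝ) * δ / 4) * (p:ℝ) ^ (i - 1)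
        = (i:ℝ) * (δ * (p:ℝ) ^ (i - 1)) / 2 := by ring
    linarith [h1, h2, key, hAQ, heq]
  have hsum2 : 2 * ((i:ℝ) * δ / 4) * (p:ℝ) ^ (i - 1) ≤ |E p| + |E (p - 1)| := by
    have h5 : E p ≤ |E p| := le_abs_self _
    have h6 : -E (p - 1) ≤ |E (p - 1)| := neg_le_abs _
    linarith
  rcases le_total (|E (p - 1)|) (|E p|) with h | h
  · refine ⟨p, by omega, by omega, ?_⟩
    rw [← hE p]
    linarith
  · refine ⟨p - 1, by omega, by omega, ?_⟩
    rw [← hE (p - 1)]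
    have hle : ((p - 1 : ℕ):ℝ) ^ (i - 1) ≤ (p:ℝ) ^ (i - 1) := by
      apply pow_le_pow_left₀ (by positivity) (by rw [hcast]; linarith)
    have h7 := mul_le_mul_of_nonneg_left hle hc.le
    linarith
end
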